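/- arXiv:2108.05154 — 3 statements merged into one kernel-verified Lean document; each statement's English description precedes it below -/
import Mathlib

section
/- Let k be a commutative ring and let A be a unital involutive k-algebra. Then the k-submodule M(A) spanned by the set {a₀*a₁*a₂ - a₂*(star a₁)*a₀ : a₀, a₁, a₂ ∈ A} is a two-sided ideal of A: for every x ∈ M(A) and every b ∈ A, both b*x ∈ M(A) and x*b ∈ M(A). -/
/-- The `k`-submodule of an involutive `k`-algebra `A` spanned by the elements
`a₀*a₁*a₂ - a₂*(star a₁)*a₀`. -/
def hyperoctahedralRelationSubmodule (k A : Type*) [CommRing k] [StarRing k] [TrivialStar k] [Ring A]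
    [Algebra k A] [StarRing A] [StarModule k A] : Submodule k A :=
  Submodule.span k {x : A | ∃ a₀ a₁ a₂ : A, x = a₀ * a₁ * a₂ - a₂ * star a₁ * a₀}

lemma hyperoctahedral_mem_gen (k A : Type*) [CommRing k] [StarRing k] [TrivialStar k] [Ring A]
    [Algebra k A] [StarRing A] [StarModule k A] (a b c : A) :
    a * b * c - c * star b * a ∈ hyperoctahedralRelationSubmodule k A :=
  Submodule.subset_span ⟨a, b, c, rfl⟩

lemma hyperoctahedral_gen_mul (k A : Type*) [CommRing k] [StarRing k] [TrivialStar k] [Ring A]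
    [Algebra k A] [StarRing A] [StarModule k A] (a b c x : A) :
    (a * b * c - c * star b * a) * x ∈ hyperoctahedralRelationSubmodule k A := by
  have key : (a * b * c - c * star b * a) * x =
      (a * b * (c * x) - (c * x) * star b * a)
      + (c * x * (star b * a) - (star b * a) * star x * c)
      - (c * (star b * a) * x - x * star (star b * a) * c)
      - (1 * (x * star (star b * a)) * c - c * star (x * star (star b * a)) * 1)
      - (c * 1 * ((star b * a) * star x) - ((star b * a) * star x) * star 1 * c) := by
    simp only [star_mul, star_star, star_one]
    noncomm_ring
  rw [key]
  exact Submodule.sub_mem _ (Submodule.sub_mem _ (Submodule.sub_mem _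
    (Submodule.add_mem _ (hyperoctahedral_mem_gen k A a b (c * x))
      (hyperoctahedral_mem_gen k A c x (star b * a)))
    (hyperoctahedral_mem_gen k A c (star b * a) x))
    (hyperoctahedral_mem_gen k A 1 (x * star (star b * a)) c))
    (hyperoctahedral_mem_gen k A c 1 ((star b * a) * star x))

/-- The submodule spanned by `{a₀*a₁*a₂ - a₂*(star a₁)*a₀}` is a two-sided ideal of `A`. -/
theorem hyperoctahedralRelationSubmodule_isTwoSidedIdeal
    (k A : Type*) [CommRing k] [StarRing k] [TrivialStar k] [Ring A] [Algebra k A] [StarRing A] [StarModule k A]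
    (x : A) (hx : x ∈ hyperoctahedralRelationSubmodule k A) (b : A) :
    b * x ∈ hyperoctahedralRelationSubmodule k A ∧
      x * b ∈ hyperoctahedralRelationSubmodule k A := by
  have hright : x * b ∈ hyperoctahedralRelationSubmodule k A := by
    induction hx using Submodule.span_induction with
    | mem w hw =>
      obtain ⟨a₀, a₁, a₂, rfl⟩ := hw
      exact hyperoctahedral_gen_mul k A a₀ a₁ a₂ b
    | zero => simp only [zero_mul]; exact (hyperoctahedralRelationSubmodule k A).zero_mem
    | add y z _ _ hy hz => rw [add_mul]; exact Submodule.add_mem _ hy hz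
    | smul r y _ hy => rw [smul_mul_assoc]; exact Submodule.smul_mem _ r hy
  refine ⟨?_, hright⟩
  have hcomm : x * 1 * b - b * star (1 : A) * x ∈ hyperoctahedralRelationSubmodule k A :=
    hyperoctahedral_mem_gen k A x 1 b
  have : b * x = x * b - (x * 1 * b - b * star (1 : A) * x) := by
    simp only [star_one, mul_one]; noncomm_ring
  rw [this]
  exact Submodule.sub_mem _ hright hcomm
end

section
/- Let A be a commutative ring and let n ≥ 2. Equip the matrix ring Matrix (Fin n) (Fin n) A with the involution given by transpose (the conjugate transpose for the trivial involution on A). Then the A-submodule of Matrix (Fin n) (Fin n) A spanned by the set {P*Q*R - R*Qᵀ*P : P, Q, R ∈ Matrix (Fin n) (Fin n) A} is the whole matrix ring, i.e. Submodule.span A {P*Q*R - R*Qᵀ*P} = ⊤. (This is the key computation showing that hyperoctahedral homology fails to preserve Morita equivalence: the degree-zero hyperoctahedral homology of Matrix (Fin n) (Fin n) A vanishes while that of A is A itself.) -/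
open Matrix

theorem Matrix.single_eq_mul_mul_sub_mul_transpose_mul {ι α : Type*} [Fintype ι]
    [DecidableEq ι] [Ring α] {i k : ι} (hki : k ≠ i) (j : ι) (a : α) :
    single i j a =
      single i k a * single k j 1 * single j j 1 -
        single j j 1 * (single k j 1)ᵀ * single i k a := by
  rw [transpose_single, single_mul_single_same, single_mul_single_same, single_mul_single_same,
    single_mul_single_of_ne _ j k i hki, sub_zero, mul_one, mul_one]

theorem Matrix.span_mul_mul_sub_mul_transpose_mul_eq_top {ι A : Type*} [Fintype ι]
    [DecidableEq ι] [Nontrivial ι] [Ring A] :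
    Submodule.span A
      {X : Matrix ι ι A | ∃ P Q R : Matrix ι ι A, X = P * Q * R - R * Qᵀ * P} = ⊤ := by
  refine eq_top_iff.2 fun M _ => M.induction_on' (Submodule.zero_mem _)
    (fun _ _ => Submodule.add_mem _) fun i j a => Submodule.subset_span ?_
  obtain ⟨k, hki⟩ := exists_ne i
  exact ⟨_, _, _, single_eq_mul_mul_sub_mul_transpose_mul hki j a⟩

/-- For `n ≥ 2`, the `A`-submodule of the matrix ring `Matrix (Fin n) (Fin n) A` spanned by
the elements `P*Q*R - R*Qᵀ*P` (the involution being matrix transpose) is the whole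
matrix ring.  This is the key computation showing that hyperoctahedral homology fails to
preserve Morita equivalence. -/
theorem matrix_hyperoctahedralRelation_span_eq_top
    (A : Type*) [CommRing A] (n : ℕ) (hn : 2 ≤ n) :
    Submodule.span A
      {X : Matrix (Fin n) (Fin n) A |
        ∃ P Q R : Matrix (Fin n) (Fin n) A, X = P * Q * R - R * Qᵀ * P} = ⊤ := by
  have : Nontrivial (Fin n) := Fin.nontrivial_iff_two_le.2 hn
  exact span_mul_mul_sub_mul_transpose_mul_eq_top
end

section
/- For every natural number n, the hyperoctahedral group H_{n+1} (the group of signed permutations of Fin (n+1)) is generated by the set of block-flip elements {w_{p,q,r} : p + q + r = n + 1}; that is, Subgroup.closure {w_{p,q,r} : p, q, r ∈ ℕ, p + q + r = n + 1} = ⊤. -/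
/-
The block flips with empty middle block are the rotations `i ↦ i - p` of `Fin (n + 1)`; in
particular `w_{n,0,1}` is the long cycle `finRotate`. The flips `w_{0,1,n}` and `w_{1,0,n}` have
the same underlying permutation, so their quotient is the sign flip at `0`, and conjugating it by
rotations gives the sign flip at every coordinate. Hence the closure contains the kernel
`C₂^{n+1}` of the projection to `Σ_{n+1}`, and it remains to see that its image is everything:
it contains the long cycle and the adjacent transposition `(0 1) = w_{n-1,0,2} w_{0,2,n-1}`.
-/

/-- The action of permutations on sign vectors, permuting the coordinates. -/
def signPermAction (m : ℕ) :
    Equiv.Perm (Fin m) →* MulAut (Fin m → Multiplicative (ZMod 2)) where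
  toFun σ := MulEquiv.arrowCongr σ (MulEquiv.refl (Multiplicative (ZMod 2)))
  map_one' := by ext f i; rfl
  map_mul' σ τ := by ext f i; rfl

/-- The hyperoctahedral group `H_{n+1} = C₂^{n+1} ⋊ Σ_{n+1}`, realized as the group of
signed permutations of `Fin (n+1)`. -/
abbrev HyperoctahedralGroup (n : ℕ) : Type :=
  (Fin (n + 1) → Multiplicative (ZMod 2)) ⋊[signPermAction (n + 1)] Equiv.Perm (Fin (n + 1))

/-- The underlying permutation of the block-flip element `w_{p,q,r}`: the first block of
size `p` moves to the end, the middle block of size `q` is reversed, and the last block of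
size `r` moves to the front. -/
def blockFlipPerm (n p q r : ℕ) (h : p + q + r = n + 1) : Equiv.Perm (Fin (n + 1)) :=
  (finCongr h.symm).trans <|
    (finSumFinEquiv (m := p + q) (n := r)).symm.trans <|
      ((finSumFinEquiv (m := p) (n := q)).symm.sumCongr (Equiv.refl (Fin r))).trans <|
        (Equiv.sumComm (Fin p ⊕ Fin q) (Fin r)).trans <|
          ((Equiv.refl (Fin r)).sumCongr
              (((Equiv.refl (Fin p)).sumCongr (Fin.revPerm (n := q))).trans
                (Equiv.sumComm (Fin p) (Fin q)))).trans <|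
            ((Equiv.refl (Fin r)).sumCongr (finSumFinEquiv (m := q) (n := p))).trans <|
              (finSumFinEquiv (m := r) (n := q + p)).trans
                (finCongr (by omega : r + (q + p) = n + 1))

/-- The block-flip element `w_{p,q,r}` of the hyperoctahedral group: its sign component is
nontrivial exactly at the `q` middle-block positions `p, …, p + q - 1`, and its underlying
permutation is `blockFlipPerm`. -/
def blockFlip (n p q r : ℕ) (h : p + q + r = n + 1) : HyperoctahedralGroup n :=
  ⟨fun i => if p ≤ (i : ℕ) ∧ (i : ℕ) < p + q then Multiplicative.ofAdd (1 : ZMod 2) else 1,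
    blockFlipPerm n p q r h⟩

open Equiv SemidirectProduct

theorem SemidirectProduct.eq_top_of_range_inl_le_of_map_rightHom_eq_top {N G : Type*} [Group N]
    [Group G] {φ : G →* MulAut N} {K : Subgroup (N ⋊[φ] G)}
    (hN : (inl : N →* N ⋊[φ] G).range ≤ K) (hG : K.map rightHom = ⊤) : K = ⊤ := by
  have hker : (rightHom : N ⋊[φ] G →* G).ker ≤ K := range_inl_eq_ker_rightHom (φ := φ) ▸ hN
  rw [← Subgroup.comap_map_eq_self hker, hG, Subgroup.comap_top]

lemma signPermAction_mulSingle {m : ℕ} (σ : Perm (Fin m)) (j : Fin m)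
    (a : Multiplicative (ZMod 2)) :
    signPermAction m σ (Pi.mulSingle j a) = Pi.mulSingle (σ j) a := by
  funext i
  simp [signPermAction, Pi.mulSingle_apply, symm_apply_eq]

lemma blockFlipPerm_apply_val (n p q r : ℕ) (h : p + q + r = n + 1) (i : Fin (n + 1)) :
    (blockFlipPerm n p q r h i : ℕ) =
      if (i : ℕ) < p then r + q + i
      else if (i : ℕ) < p + q then r + p + q - 1 - i
      else (i : ℕ) - (p + q) := by
  unfold blockFlipPerm
  simp only [Equiv.trans_apply, finCongr_apply, Equiv.sumCongr_apply]
  rcases lt_or_ge (i : ℕ) (p + q) with h1 | h1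
  · rw [show Fin.cast h.symm i = Fin.castAdd r ⟨i, h1⟩ from rfl,
      finSumFinEquiv_symm_apply_castAdd]
    rcases lt_or_ge (i : ℕ) p with h2 | h2
    · rw [Sum.map_inl, show (⟨i, h1⟩ : Fin (p + q)) = Fin.castAdd q ⟨i, h2⟩ from rfl,
        finSumFinEquiv_symm_apply_castAdd]
      simp
      split_ifs <;> omega
    · rw [Sum.map_inl, show (⟨i, h1⟩ : Fin (p + q)) = Fin.natAdd p ⟨i - p, by omega⟩ from
        Fin.ext (by simp; omega), finSumFinEquiv_symm_apply_natAdd]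
      simp [Fin.rev]
      split_ifs <;> omega
  · rw [show Fin.cast h.symm i = Fin.natAdd (p + q) ⟨i - (p + q), by omega⟩ from
      Fin.ext (by simp; omega), finSumFinEquiv_symm_apply_natAdd]
    simp
    split_ifs <;> omega

def signFlip (n : ℕ) (j : Fin (n + 1)) : HyperoctahedralGroup n :=
  inl (Pi.mulSingle j (Multiplicative.ofAdd 1))

lemma blockFlip_zero_middle (n p r : ℕ) (h : p + 0 + r = n + 1) :
    blockFlip n p 0 r h = inr (blockFlipPerm n p 0 r h) := by
  ext i <;> simp [blockFlip]

lemma blockFlip_zero_one_mul_inv (n : ℕ) (h₁ : 0 + 1 + n = n + 1) (h₂ : 1 + 0 + n = n + 1) :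
    blockFlip n 0 1 n h₁ * (blockFlip n 1 0 n h₂)⁻¹ = signFlip n 0 := by
  have hperm : blockFlipPerm n 0 1 n h₁ = blockFlipPerm n 1 0 n h₂ := by
    ext i
    simp only [blockFlipPerm_apply_val]
    split_ifs <;> omega
  have hleft : (blockFlip n 0 1 n h₁).left =
      Pi.mulSingle (0 : Fin (n + 1)) (Multiplicative.ofAdd (1 : ZMod 2)) := by
    funext i
    simp only [blockFlip, Pi.mulSingle_apply, Fin.ext_iff, Fin.val_zero]
    split_ifs <;> first | rfl | omega
  rw [blockFlip_zero_middle, ← hperm, mul_inv_eq_iff_eq_mul,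
    ← inl_left_mul_inr_right (blockFlip n 0 1 n h₁), hleft]
  rfl

lemma blockFlipPerm_apply_zero (n j : ℕ) (h : (n + 1 - j) + 0 + j = n + 1) (hj : j < n + 1) :
    blockFlipPerm n (n + 1 - j) 0 j h 0 = ⟨j, hj⟩ := by
  ext
  simp only [blockFlipPerm_apply_val]
  split_ifs <;> simp only [Fin.val_zero] at * <;> omega

lemma blockFlipPerm_eq_finRotate (n : ℕ) (h : n + 0 + 1 = n + 1) :
    blockFlipPerm n n 0 1 h = finRotate (n + 1) := by
  ext i
  rw [blockFlipPerm_apply_val, finRotate_apply, Fin.val_add_one]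
  split_ifs <;> simp only [Fin.ext_iff, Fin.val_last] at * <;> omega

lemma swap_zero_one_eq_blockFlipPerm_mul (m : ℕ) (h₁ : m + 0 + 2 = m + 1 + 1)
    (h₂ : 0 + 2 + m = m + 1 + 1) :
    swap 0 1 = blockFlipPerm (m + 1) m 0 2 h₁ * blockFlipPerm (m + 1) 0 2 m h₂ := by
  ext i
  simp only [Perm.mul_apply, blockFlipPerm_apply_val]
  rw [swap_apply_def]
  split_ifs <;> simp only [Fin.ext_iff, Fin.val_zero, Fin.val_one] at * <;> omega

def blockFlips (n : ℕ) : Set (HyperoctahedralGroup n) :=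
  {x | ∃ (p q r : ℕ) (h : p + q + r = n + 1), x = blockFlip n p q r h}

section closure

open Subgroup

variable (n : ℕ)

lemma blockFlip_mem_closure_blockFlips (p q r : ℕ) (h : p + q + r = n + 1) :
    blockFlip n p q r h ∈ closure (blockFlips n) :=
  subset_closure ⟨p, q, r, h, rfl⟩

lemma signFlip_mem_closure_blockFlips (j : Fin (n + 1)) :
    signFlip n j ∈ closure (blockFlips n) := by
  have h₀ : signFlip n 0 ∈ closure (blockFlips n) := by
    rw [← blockFlip_zero_one_mul_inv n (by omega) (by omega)]
    exact mul_mem (blockFlip_mem_closure_blockFlips n _ _ _ _)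
      (inv_mem (blockFlip_mem_closure_blockFlips n _ _ _ _))
  obtain ⟨j, hj⟩ := j
  have h : n + 1 - j + 0 + j = n + 1 := by omega
  have hσ : inr (blockFlipPerm n (n + 1 - j) 0 j h) ∈ closure (blockFlips n) :=
    blockFlip_zero_middle n _ _ h ▸ blockFlip_mem_closure_blockFlips n _ _ _ h
  have hconj : signFlip n ⟨j, hj⟩ =
      inr (blockFlipPerm n (n + 1 - j) 0 j h) * signFlip n 0 *
        (inr (blockFlipPerm n (n + 1 - j) 0 j h))⁻¹ := by
    rw [← map_inv, signFlip, signFlip, ← inl_aut, signPermAction_mulSingle,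
      blockFlipPerm_apply_zero n j h hj]
  rw [hconj]
  exact mul_mem (mul_mem hσ h₀) (inv_mem hσ)

lemma range_inl_le_closure_blockFlips :
    (inl : _ →* HyperoctahedralGroup n).range ≤ closure (blockFlips n) := by
  rintro _ ⟨f, rfl⟩
  show f ∈ (closure (blockFlips n)).comap inl
  refine pi_mem_of_mulSingle_mem f fun j => ?_
  obtain h | h : f j = 1 ∨ f j = Multiplicative.ofAdd 1 := by
    generalize f j = a
    revert a
    decide
  · rw [h, Pi.mulSingle_one]
    exact one_mem _
  · rw [h]
    exact signFlip_mem_closure_blockFlips n j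

lemma blockFlipPerm_mem_map_rightHom (p q r : ℕ) (h : p + q + r = n + 1) :
    blockFlipPerm n p q r h ∈ (closure (blockFlips n)).map rightHom :=
  ⟨_, blockFlip_mem_closure_blockFlips n p q r h, rfl⟩

lemma map_rightHom_closure_blockFlips : (closure (blockFlips n)).map rightHom = ⊤ := by
  rcases n with _ | m
  · refine eq_top_iff.2 fun σ _ => ?_
    rw [show σ = 1 from Equiv.ext fun i => Fin.subsingleton_one.elim _ _]
    exact one_mem _
  rw [eq_top_iff, ← Perm.closure_cycle_adjacent_swap isCycle_finRotate support_finRotate 0,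
    closure_le, finRotate_apply, zero_add]
  rintro σ (rfl | rfl)
  · rw [← blockFlipPerm_eq_finRotate (m + 1) rfl]
    exact blockFlipPerm_mem_map_rightHom _ _ _ _ _
  · rw [swap_zero_one_eq_blockFlipPerm_mul m rfl (by omega)]
    exact mul_mem (blockFlipPerm_mem_map_rightHom _ _ _ _ _)
      (blockFlipPerm_mem_map_rightHom _ _ _ _ _)

end closure

/-- The hyperoctahedral group `H_{n+1}` is generated by the block-flip elements
`w_{p,q,r}` with `p + q + r = n + 1`. -/
theorem hyperoctahedral_closure_blockFlips (n : ℕ) :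
    Subgroup.closure
      {x : HyperoctahedralGroup n |
        ∃ (p q r : ℕ) (h : p + q + r = n + 1), x = blockFlip n p q r h} = ⊤ :=
  SemidirectProduct.eq_top_of_range_inl_le_of_map_rightHom_eq_top
    (range_inl_le_closure_blockFlips n) (map_rightHom_closure_blockFlips n)
end
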